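/- Let A be a uniform algebra on a connected compact Hausdorff space X. If A is an integral domain, then A is antisymmetric: every f ∈ A that is real-valued on X is constant. -/

import Mathlib

/-!
If a real-valued `f ∈ A` took two values `a < b`, put `c = (a + b) / 2`. By Weierstrass
approximation, a closed subalgebra containing a real-valued `f` contains `φ ∘ f` for every
continuous `φ : ℝ → ℝ`; so `(f - c)⁺` and `(c - f)⁺` lie in `A`. Their product vanishes, yet
neither factor does, contradicting that `A` is an integral domain.
-/

section

variable {X : Type*} [TopologicalSpace X] [CompactSpace X]

lemma Subalgebra.comp_re_mem_of_isClosed (A : Subalgebra ℂ C(X, ℂ))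
    (hA : IsClosed (A : Set C(X, ℂ))) {f : C(X, ℂ)} (hf : f ∈ A) (hre : ∀ x, (f x).im = 0)
    {φ : ℝ → ℝ} (hφ : Continuous φ) {g : C(X, ℂ)} (hg : ∀ x, g x = φ (f x).re) : g ∈ A := by
  rw [← SetLike.mem_coe, ← hA.closure_eq, Metric.mem_closure_iff]
  intro ε hε
  obtain ⟨p, hp⟩ := exists_polynomial_near_of_continuousOn (-‖f‖) ‖f‖ φ hφ.continuousOn
    (ε / 2) (half_pos hε)
  refine ⟨Polynomial.aeval f (p.map Complex.ofRealHom),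
    Algebra.adjoin_le (Set.singleton_subset_iff.2 hf) (Polynomial.aeval_mem_adjoin_singleton _ _),
    lt_of_le_of_lt ((ContinuousMap.dist_le (half_pos hε).le).2 fun x => ?_) (half_lt_self hε)⟩
  set t := (f x).re
  have hfx : f x = t := Complex.ext rfl (by simp [hre x])
  have ht : t ∈ Set.Icc (-‖f‖) ‖f‖ :=
    abs_le.mp ((Complex.abs_re_le_norm _).trans (f.norm_coe_le_norm x))
  rw [Polynomial.aeval_continuousMap_apply, hfx, ← Complex.ofRealHom_eq_coe t,
    Polynomial.eval_map, Polynomial.eval₂_at_apply, Complex.ofRealHom_eq_coe, hg, Complex.dist_eq,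
    ← Complex.ofReal_sub, Complex.norm_real, Real.norm_eq_abs, abs_sub_comm]
  exact (hp t ht).le

lemma forall_re_le_or_forall_le_re (A : Subalgebra ℂ C(X, ℂ))
    (hA : IsClosed (A : Set C(X, ℂ)))
    (hdomain : ∀ f g : C(X, ℂ), f ∈ A → g ∈ A → f * g = 0 → f = 0 ∨ g = 0)
    {f : C(X, ℂ)} (hf : f ∈ A) (hre : ∀ x, (f x).im = 0) (c : ℝ) :
    (∀ x, (f x).re ≤ c) ∨ ∀ x, c ≤ (f x).re := by
  let u : C(X, ℂ) := ⟨fun x => (max ((f x).re - c) 0 : ℝ), by fun_prop⟩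
  let v : C(X, ℂ) := ⟨fun x => (max (c - (f x).re) 0 : ℝ), by fun_prop⟩
  have hu : u ∈ A :=
    A.comp_re_mem_of_isClosed hA hf hre (φ := fun t => max (t - c) 0) (by fun_prop) fun _ => rfl
  have hv : v ∈ A :=
    A.comp_re_mem_of_isClosed hA hf hre (φ := fun t => max (c - t) 0) (by fun_prop) fun _ => rfl
  have huv : u * v = 0 := by
    ext x
    rcases le_total (f x).re c with hx | hx <;> simp [u, v, hx]
  refine (hdomain u v hu hv huv).imp (fun hu0 x => ?_) fun hv0 x => ?_
  · simpa [u] using DFunLike.congr_fun hu0 x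
  · simpa [v] using DFunLike.congr_fun hv0 x

end

variable {X : Type} [TopologicalSpace X] [CompactSpace X] [T2Space X]

theorem stmt_2 (A : Subalgebra ℂ C(X, ℂ))
    (hclosed : IsClosed (A : Set C(X, ℂ)))
    (hdomain : ∀ f g : C(X, ℂ), f ∈ A → g ∈ A → f * g = 0 → f = 0 ∨ g = 0) :
    ∀ f ∈ A, (∀ x : X, (f x).im = 0) → ∃ c : ℂ, ∀ x : X, f x = c := by
  intro f hf hre
  rcases isEmpty_or_nonempty X with _ | ⟨⟨x₀⟩⟩
  · exact ⟨0, isEmptyElim⟩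
  refine ⟨f x₀, fun y => Complex.ext ?_ (by simp [hre])⟩
  rcases forall_re_le_or_forall_le_re A hclosed hdomain hf hre (((f x₀).re + (f y).re) / 2)
    with h | h
  · linarith [h x₀, h y]
  · linarith [h x₀, h y]
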